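/- If x < 1/6 then τ(x) < 1/2, and if x_k < x < x_{k-1} for some k ≥ 1, where x_k = 1/2 − Σ_{j=1}^k 4^{-j}, then τ(x) > 1/2. -/

import Mathlib

open Finset

/-- Distance from `t` to the nearest integer. -/
noncomputable def distNearestInt (t : ℝ) : ℝ := ⨅ n : ℤ, |t - (n : ℝ)|

/-- The Takagi function. -/
noncomputable def takagi (x : ℝ) : ℝ := ∑' n : ℕ, distNearestInt (2 ^ n * x) / 2 ^ n

/-- The partial Takagi function of level `n`. -/
noncomputable def takagiPartial (n : ℕ) (x : ℝ) : ℝ :=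
  ∑ j ∈ Finset.range n, distNearestInt (2 ^ j * x) / 2 ^ j

/-- The deficient digit function `D_j` attached to a binary digit sequence `b`
(with `b i` the `(i+1)`-st binary digit): number of 0's minus number of 1's
among the first `j` digits. -/
def defD (b : ℕ → ℕ) (j : ℕ) : ℤ := (j : ℤ) - 2 * ∑ i ∈ Finset.range j, (b i : ℤ)

/-- `x` is the real number with binary expansion `0.b₁b₂b₃…`, `b i` being digit `i+1`. -/
def IsBinaryExpansion (b : ℕ → ℕ) (x : ℝ) : Prop :=
  (∀ i, b i ≤ 1) ∧ x = ∑' i : ℕ, (b i : ℝ) / 2 ^ (i + 1)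

/-- The deficient digit set `Ω^L`. -/
def OmegaL : Set ℝ :=
  {x | ∃ b : ℕ → ℕ, IsBinaryExpansion b x ∧ ∀ j ≥ 1, 0 ≤ defD b j}

/-- `x_k = 1/2 - ∑_{j=1}^k (1/4)^j`. -/
noncomputable def xSeq (k : ℕ) : ℝ := 1 / 2 - ∑ j ∈ Finset.range k, (1 / 4 : ℝ) ^ (j + 1)

/-! ### Auxiliary lemmas on `distNearestInt` -/

lemma dni_bdd (t : ℝ) : BddBelow (Set.range fun n : ℤ => |t - (n : ℝ)|) :=
  ⟨0, by rintro y ⟨n, rfl⟩; positivity⟩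

lemma dni_le (t : ℝ) (n : ℤ) : distNearestInt t ≤ |t - n| := ciInf_le (dni_bdd t) n

lemma le_dni (t c : ℝ) (h : ∀ n : ℤ, c ≤ |t - n|) : c ≤ distNearestInt t := le_ciInf h

lemma dni_eq_abs (t : ℝ) : distNearestInt t = |t - round t| := by
  refine le_antisymm (dni_le t (round t)) (le_dni _ _ fun n => ?_)
  rcases eq_or_ne n (round t) with rfl | h
  · exact le_rfl
  · have h1 : (1 : ℝ) ≤ |(n : ℝ) - round t| := by
      rw [← Int.cast_sub, ← Int.cast_abs]
      exact_mod_cast Int.one_le_abs (sub_ne_zero.mpr h)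
    have h2 := abs_sub_round t
    have h3 : |(n:ℝ) - round t| ≤ |t - n| + |t - round t| := by
      calc |(n:ℝ) - round t| = |(t - (round t:ℝ)) - (t - (n:ℝ))| := by ring_nf
        _ ≤ |t - (round t:ℝ)| + |t - (n:ℝ)| := abs_sub _ _
        _ = |t - n| + |t - round t| := by ring
    nlinarith [abs_nonneg (t - (n:ℝ)), abs_nonneg (t - (round t:ℝ))]

lemma dni_nonneg (t : ℝ) : 0 ≤ distNearestInt t := by rw [dni_eq_abs]; positivity

lemma dni_le_half (t : ℝ) : distNearestInt t ≤ 1 / 2 := (dni_le t (round t)).trans (abs_sub_round t)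

lemma dni_int_add (m : ℤ) (t : ℝ) : distNearestInt (m + t) = distNearestInt t := by
  rw [dni_eq_abs, dni_eq_abs, add_comm, round_add_intCast]
  push_cast
  ring_nf

lemma dni_eq_self {t : ℝ} (h0 : 0 ≤ t) (h1 : t ≤ 1 / 2) : distNearestInt t = t := by
  refine le_antisymm (by simpa [abs_of_nonneg h0] using dni_le t 0) (le_dni _ _ fun n => ?_)
  rcases le_or_gt n 0 with h | h
  · have : (n : ℝ) ≤ 0 := by exact_mod_cast h
    rw [abs_of_nonneg (by linarith)]; linarith
  · have : (1 : ℝ) ≤ (n : ℝ) := by exact_mod_cast h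
    rw [abs_of_nonpos (by linarith)]; linarith

lemma dni_eq_one_sub {t : ℝ} (h0 : 1 / 2 ≤ t) (h1 : t ≤ 1) : distNearestInt t = 1 - t := by
  refine le_antisymm (by simpa [abs_of_nonpos (by linarith : t - (1:ℝ) ≤ 0)] using dni_le t 1)
    (le_dni _ _ fun n => ?_)
  rcases le_or_gt n 0 with h | h
  · have : (n : ℝ) ≤ 0 := by exact_mod_cast h
    rw [abs_of_nonneg (by linarith)]; linarith
  · have : (1 : ℝ) ≤ (n : ℝ) := by exact_mod_cast h
    rw [abs_of_nonpos (by linarith)]; linarith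

/-! ### Auxiliary lemmas on `takagi` -/

lemma takagi_summable (x : ℝ) : Summable (fun n : ℕ => distNearestInt (2 ^ n * x) / 2 ^ n) := by
  refine Summable.of_nonneg_of_le (fun n => div_nonneg (dni_nonneg _) (by positivity)) (fun n => ?_)
    ((summable_geometric_of_lt_one (by norm_num) (by norm_num : (1:ℝ)/2 < 1)).mul_left (1/2))
  have h := dni_le_half (2 ^ n * x)
  rw [div_le_iff₀ (by positivity : (0:ℝ) < 2 ^ n)]
  calc distNearestInt (2 ^ n * x) ≤ 1/2 := h
    _ ≤ 1 / 2 * (1 / 2) ^ n * 2 ^ n := by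
        rw [mul_assoc, ← mul_pow]; norm_num

lemma takagi_nonneg (x : ℝ) : 0 ≤ takagi x :=
  tsum_nonneg fun n => div_nonneg (dni_nonneg _) (by positivity)

lemma dni_le_takagi (x : ℝ) : distNearestInt x ≤ takagi x := by
  have := Summable.le_tsum (takagi_summable x) 0 (fun n _ => div_nonneg (dni_nonneg _) (by positivity))
  simpa [takagi] using this

lemma takagi_funeq (x : ℝ) : takagi x = distNearestInt x + takagi (2 * x) / 2 := by
  rw [takagi, Summable.tsum_eq_zero_add (takagi_summable x)]
  congr 1
  · simp
  · rw [takagi, eq_div_iff (by norm_num : (2:ℝ) ≠ 0), ← tsum_mul_right]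
    refine tsum_congr fun n => ?_
    rw [div_mul_eq_mul_div, div_eq_div_iff (by positivity) (by positivity)]
    ring_nf

lemma takagi_add_one (x : ℝ) : takagi (x + 1) = takagi x := by
  refine tsum_congr fun n => ?_
  congr 1
  have : (2:ℝ) ^ n * (x + 1) = ((2 ^ n : ℤ) : ℝ) + 2 ^ n * x := by push_cast; ring
  rw [this, dni_int_add]

lemma takagi_le_one (x : ℝ) : takagi x ≤ 1 := by
  have h : takagi x ≤ ∑' n : ℕ, 1/2 * (1/2 : ℝ) ^ n := by
    refine Summable.tsum_le_tsum (fun n => ?_) (takagi_summable x)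
      ((summable_geometric_of_lt_one (by norm_num) (by norm_num)).mul_left _)
    rw [div_le_iff₀ (by positivity : (0:ℝ) < 2 ^ n)]
    calc distNearestInt (2 ^ n * x) ≤ 1/2 := dni_le_half _
      _ ≤ 1 / 2 * (1 / 2) ^ n * 2 ^ n := by rw [mul_assoc, ← mul_pow]; norm_num
  rw [tsum_mul_left, tsum_geometric_of_lt_one (by norm_num) (by norm_num)] at h
  norm_num at h
  linarith

lemma pair_le (t : ℝ) : distNearestInt t + distNearestInt (2 * t) / 2 ≤ 1 / 2 := by
  have hu0 := Int.fract_nonneg t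
  have hu1 := Int.fract_lt_one t
  set u := Int.fract t with hu
  have h1 : distNearestInt t = distNearestInt u := by
    conv_lhs => rw [show t = (⌊t⌋ : ℝ) + u from (Int.floor_add_fract t).symm]
    rw [dni_int_add]
  have h2 : distNearestInt (2 * t) = distNearestInt (2 * u) := by
    conv_lhs => rw [show 2 * t = ((2 * ⌊t⌋ : ℤ) : ℝ) + 2 * u by
      have := Int.floor_add_fract t; push_cast; linarith]
    rw [dni_int_add]
  rw [h1, h2]
  rcases le_or_gt u (1/2) with h | h
  · rw [dni_eq_self hu0 h]
    rcases le_or_gt u (1/4) with h' | h'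
    · rw [dni_eq_self (by linarith) (by linarith)]; linarith
    · rw [dni_eq_one_sub (by linarith) (by linarith)]; linarith
  · rw [dni_eq_one_sub h.le (by linarith)]
    have h3 : distNearestInt (2 * u) = distNearestInt (2 * u - 1) := by
      conv_lhs => rw [show 2 * u = ((1:ℤ):ℝ) + (2 * u - 1) by push_cast; ring]
      rw [dni_int_add]
    rw [h3]
    rcases le_or_gt u (3/4) with h' | h'
    · rw [dni_eq_self (by linarith) (by linarith)]; linarith
    · rw [dni_eq_one_sub (by linarith) (by linarith)]; linarith

lemma takagi_aux (n : ℕ) : ∀ x : ℝ, takagi x ≤ 2/3 + 1/3 * (1/4) ^ n := by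
  induction n with
  | zero => intro x; have := takagi_le_one x; norm_num; linarith
  | succ n ih =>
    intro x
    have e : takagi x = (distNearestInt x + distNearestInt (2 * x) / 2)
        + takagi (2 * (2 * x)) / 4 := by
      rw [takagi_funeq x, takagi_funeq (2 * x)]; ring
    have := pair_le x
    have := ih (2 * (2 * x))
    rw [e]; rw [pow_succ]; linarith

lemma takagi_le_twothirds (x : ℝ) : takagi x ≤ 2/3 := by
  refine le_of_forall_pos_le_add fun ε hε => ?_
  obtain ⟨n, hn⟩ := exists_pow_lt_of_lt_one (by positivity : (0:ℝ) < 3 * ε)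
    (by norm_num : (1/4:ℝ) < 1)
  have := takagi_aux n x
  linarith

lemma xSeq_eq (k : ℕ) : xSeq k = 1/6 + 1/3 * (1/4) ^ k := by
  induction k with
  | zero => simp [xSeq]; norm_num
  | succ k ih =>
    rw [xSeq, Finset.sum_range_succ, ← sub_sub, ← xSeq, ih, pow_succ]
    ring

/-- The key inductive statement for the second part. -/
lemma takagi_gt_aux (m : ℕ) : ∀ x : ℝ, xSeq (m + 1) < x → x < xSeq m → 1 / 2 < takagi x := by
  induction m with
  | zero =>
    intro x hx1 hx2
    rw [xSeq_eq] at hx1 hx2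
    norm_num at hx1 hx2
    -- x ∈ (1/4, 1/2)
    have e1 : takagi x = x + takagi (2 * x) / 2 := by
      rw [takagi_funeq x, dni_eq_self (by linarith) (by linarith)]
    have e2 : takagi (2 * x) = (1 - 2 * x) + takagi (2 * (2 * x)) / 2 := by
      rw [takagi_funeq (2 * x), dni_eq_one_sub (by linarith) (by linarith)]
    have e3 : takagi (2 * (2 * x)) = takagi (4 * x - 1) := by
      rw [show 2 * (2 * x) = (4 * x - 1) + 1 by ring, takagi_add_one]
    have h4 : 0 < takagi (4 * x - 1) := by
      have hd : 0 < distNearestInt (4 * x - 1) := by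
        rcases le_or_gt (4 * x - 1) (1/2) with h | h
        · rw [dni_eq_self (by linarith) h]; linarith
        · rw [dni_eq_one_sub h.le (by linarith)]; linarith
      exact hd.trans_le (dni_le_takagi _)
    rw [e1, e2, e3]; linarith
  | succ m ih =>
    intro x hx1 hx2
    rw [xSeq_eq] at hx1 hx2
    have hp2 : (0:ℝ) < (1/4) ^ (m + 2) := by positivity
    have hp1 : ((1:ℝ)/4) ^ (m + 1) ≤ 1/4 := by
      have := pow_le_pow_of_le_one (by norm_num : (0:ℝ) ≤ 1/4) (by norm_num)
        (show 1 ≤ m + 1 by omega)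
      simpa using this
    have hp1' : ((1:ℝ)/4) ^ (m + 2) ≤ 1/16 := by
      have := pow_le_pow_of_le_one (by norm_num : (0:ℝ) ≤ 1/4) (by norm_num)
        (show 2 ≤ m + 2 by omega)
      norm_num at this ⊢
      linarith
    have hx0 : 1/6 < x := by linarith
    have hxu : x < 1/4 := by linarith
    obtain ⟨t, ht⟩ : ∃ t : ℝ, t = 4 * x - 1/2 := ⟨_, rfl⟩
    have hq1 : ((1:ℝ)/4) ^ (m + 1 + 1) = 1/4 * (1/4) ^ (m + 1) := by rw [pow_succ]; ring
    have hq2 : ((1:ℝ)/4) ^ (m + 1) = 1/4 * (1/4) ^ m := by rw [pow_succ]; ring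
    have ht1 : xSeq (m + 1) < t := by
      rw [xSeq_eq, ht]; linarith
    have ht2 : t < xSeq m := by
      rw [xSeq_eq, ht]; linarith
    have htl : 1/6 < t := by
      have := xSeq_eq (m + 1); have : xSeq (m+1) = 1/6 + 1/3 * (1/4)^(m+1) := xSeq_eq _
      have hp : (0:ℝ) < (1/4) ^ (m+1) := by positivity
      linarith
    have htu : t < 1/2 := by
      have : xSeq m = 1/6 + 1/3 * (1/4)^m := xSeq_eq _
      have hp : ((1:ℝ)/4) ^ m ≤ 1 := pow_le_one₀ (by norm_num) (by norm_num)
      linarith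
    have htk := ih t ht1 ht2
    -- now unfold takagi x down to takagi t
    have e1 : takagi x = x + takagi (2 * x) / 2 := by
      rw [takagi_funeq x, dni_eq_self (by linarith) (by linarith)]
    have e2 : takagi (2 * x) = 2 * x + takagi (2 * (2 * x)) / 2 := by
      rw [takagi_funeq (2 * x), dni_eq_self (by linarith) (by linarith)]
    have e3 : takagi (2 * (2 * x)) = (1/2 - t) + takagi (2 * t) / 2 := by
      have h4x : 2 * (2 * x) = t + 1/2 := by rw [ht]; ring
      rw [h4x, takagi_funeq (t + 1/2), dni_eq_one_sub (by linarith) (by linarith),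
        show 2 * (t + 1/2) = 2 * t + 1 by ring, takagi_add_one]
      ring
    have e4 : takagi t = t + takagi (2 * t) / 2 := by
      rw [takagi_funeq t, dni_eq_self (by linarith) (by linarith)]
    rw [e1, e2, e3]
    have : t = 4 * x - 1/2 := ht
    linarith

theorem takagi_level_half_bounds :
    (∀ x : ℝ, 0 ≤ x → x < 1 / 6 → takagi x < 1 / 2) ∧
    (∀ k : ℕ, 1 ≤ k → ∀ x : ℝ, xSeq k < x → x < xSeq (k - 1) → 1 / 2 < takagi x) := by
  constructor
  · intro x hx0 hx1
    have e1 : takagi x = x + takagi (2 * x) / 2 := by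
      rw [takagi_funeq x, dni_eq_self hx0 (by linarith)]
    have h2 := takagi_le_twothirds (2 * x)
    rw [e1]; linarith
  · intro k hk x hx1 hx2
    obtain ⟨m, rfl⟩ : ∃ m, k = m + 1 := ⟨k - 1, by omega⟩
    simpa using takagi_gt_aux m x hx1 (by simpa using hx2)
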